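/- Dually, if f is monotone on (Fin n → Bool) and f a = f (a[S := ψ a]) for all a, where ψ a = ⋀_{i∈S} a i, then f a = f (a[S := true]) && (f (a[S := false]) || ψ a) for all a. -/
import Mathlib


theorem monotone_decomposition_and_or (n : ℕ) (f : (Fin n → Bool) → Bool)
    (S : Finset (Fin n))
    (hmono : ∀ a b : Fin n → Bool, (∀ i, a i ≤ b i) → f a ≤ f b)
    (hdep : ∀ a : Fin n → Bool,
      f a = f (fun i => if i ∈ S then decide (∀ j ∈ S, a j = true) else a i)) :
    ∀ a : Fin n → Bool,
      f a = (f (fun i => if i ∈ S then true else a i)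
        && (f (fun i => if i ∈ S then false else a i)
            || decide (∀ j ∈ S, a j = true))) := by
  intro a
  have h := hdep a
  by_cases hpsi : (∀ j ∈ S, a j = true)
  · have hd : decide (∀ j ∈ S, a j = true) = true := by simpa using hpsi
    rw [hd] at h ⊢
    rw [h]
    simp
  · have hd : decide (∀ j ∈ S, a j = true) = false := by simpa using hpsi
    rw [hd] at h ⊢
    rw [h, Bool.or_false]
    have hle : f (fun i => if i ∈ S then false else a i)
        ≤ f (fun i => if i ∈ S then true else a i) := by
      apply hmono
      intro i
      by_cases hi : i ∈ S <;> simp [hi]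
    rcases hft : f (fun i => if i ∈ S then true else a i)
    · rw [hft] at hle
      have hz : f (fun i => if i ∈ S then false else a i) = false :=
        le_antisymm hle (Bool.false_le _)
      rw [hz]; simp
    · simp
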